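/- arXiv:2502.10864 — 3 statements merged into one kernel-verified Lean document; each statement's English description precedes it below -/
import Mathlib

section
/- Let (w_n) be the integer sequence defined by w_1 = 1, w_2 = 0, w_3 = 4 and the recursion w_{n+3} = 2w_{n+2} + 2w_{n+1} − 4w_n. Then for all n ≥ 1, w_n = 2^{n−1} − (1/2)(α^n + β^n) where α = √2 and β = −√2; equivalently, w_n = 2^{n−1} for odd n and w_n = 2^{n−1} − 2^{n/2} for even n. -/
theorem weights_formula_one_two (w : ℕ → ℤ)
    (h1 : w 1 = 1) (h2 : w 2 = 0) (h3 : w 3 = 4)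
    (hrec : ∀ n, 1 ≤ n → w (n + 3) = 2 * w (n + 2) + 2 * w (n + 1) - 4 * w n) :
    ∀ n, 1 ≤ n →
      ((w n : ℝ) = 2 ^ (n - 1) - (1 / 2) * ((Real.sqrt 2) ^ n + (-Real.sqrt 2) ^ n) ∧
        (Odd n → w n = 2 ^ (n - 1)) ∧ (Even n → w n = 2 ^ (n - 1) - 2 ^ (n / 2))) := by
  have key : ∀ k : ℕ, w (2*k+1) = 4^k ∧ w (2*k+2) = 2*4^k - 2*2^k ∧ w (2*k+3) = 4*4^k := by
    intro k
    induction k with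
    | zero => simp [h1, h2, h3]
    | succ k ih =>
      obtain ⟨ha, hb, hc⟩ := ih
      have r1 := hrec (2*k+1) (by omega)
      have r2 := hrec (2*k+2) (by omega)
      have e1 : 2*(k+1)+1 = 2*k+3 := by ring
      have e2 : 2*(k+1)+2 = (2*k+1)+3 := by ring
      have e3 : 2*(k+1)+3 = (2*k+2)+3 := by ring
      have e4 : (2*k+1)+2 = 2*k+3 := by ring
      have e5 : (2*k+1)+1 = 2*k+2 := by ring
      have e6 : (2*k+2)+2 = (2*k+1)+3 := by ring
      have e7 : (2*k+2)+1 = 2*k+3 := by ring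
      refine ⟨by rw [e1, hc]; ring, ?_, ?_⟩
      · rw [e2, r1, e4, e5, hc, hb, ha]; ring
      · rw [e3, r2, e6, r1, e4, e5, e7, hc, hb, ha]; ring
  intro n hn
  have sq2 : Real.sqrt 2 ^ 2 = 2 := Real.sq_sqrt (by norm_num)
  rcases Nat.even_or_odd n with he | ho
  · obtain ⟨m, hm⟩ := he
    have hm1 : 1 ≤ m := by omega
    obtain ⟨k, hk⟩ : ∃ k, m = k + 1 := ⟨m - 1, by omega⟩
    have hn2 : n = 2*k+2 := by omega
    have hw : w n = 2*4^k - 2*2^k := by rw [hn2]; exact (key k).2.1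
    have hodd : ¬ Odd n := Nat.not_odd_iff_even.mpr ⟨m, hm⟩
    have hpow : (Real.sqrt 2) ^ n = 2 ^ m := by
      rw [show n = 2*m by omega, pow_mul, sq2]
    constructor
    · rw [hw]
      have hneg : (-Real.sqrt 2) ^ n = (Real.sqrt 2) ^ n := (Even.neg_pow ⟨m, by omega⟩ _)
      rw [hneg, hpow]
      push_cast
      have h2 : (2:ℝ) ^ n = 2 ^ (n-1) * 2 := by
        rw [← pow_succ]; congr 1; omega
      have h4 : ((4:ℝ)) ^ k = 2 ^ (2*k) := by rw [pow_mul]; norm_num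
      rw [h4]
      rw [show n - 1 = 2*k+1 by omega, show m = k+1 by omega]
      ring
    · refine ⟨fun h => absurd h hodd, fun _ => ?_⟩
      rw [hw, show n - 1 = 2*k+1 by omega, show n/2 = k+1 by omega]
      ring_nf
      rw [show (4:ℤ)^k = 2^(2*k) by rw [pow_mul]; norm_num]
      ring
  · obtain ⟨k, hk⟩ := ho
    have hw : w n = 4^k := by rw [show n = 2*k+1 by omega]; exact (key k).1
    have heven : ¬ Even n := Nat.not_even_iff_odd.mpr ⟨k, hk⟩
    constructor
    · rw [hw]
      have hneg : (-Real.sqrt 2) ^ n = -((Real.sqrt 2) ^ n) := Odd.neg_pow ⟨k, hk⟩ _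
      rw [hneg]
      push_cast
      rw [show (4:ℝ)^k = 2^(2*k) by rw [pow_mul]; norm_num,
        show n - 1 = 2*k by omega]
      ring
    · refine ⟨fun _ => ?_, fun h => absurd h heven⟩
      rw [hw, show n - 1 = 2*k by omega, pow_mul]; norm_num
end

section
/- For t ≥ 2 and n ≥ t, the quantity 2^{n−1} − (1/2)·∑_{j=1}^{2t} α_j^n, where α_j ranges over the roots of x^{2t} − 2^t, equals 2^{n−1} − t·2^{n/2} when 2t ∣ n, and equals 2^{n−1} otherwise; in particular it is a nonnegative integer. -/
open Polynomial Finset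

/-
The roots of `X ^ (2t) - 2 ^ t` are `ζ ^ k * √2` for a primitive `2t`-th root of unity `ζ`, so their
`n`-th power sum is `2 ^ (n/2)` times a full sum of the `n`-th powers of the `2t`-th roots of unity,
which is `2t` when `2t ∣ n` and vanishes otherwise. Nonnegativity in the first case is
`t * 2 ^ (n/2) ≤ 2 ^ (t-1) * 2 ^ (n/2) ≤ 2 ^ (n-1)`, using `n ≥ 2t`.
-/

theorem IsPrimitiveRoot.sum_range_pow_pow {R : Type*} [CommRing R] [IsDomain R] {ζ : R} {m : ℕ}
    (hζ : IsPrimitiveRoot ζ m) (n : ℕ) :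
    ∑ k ∈ range m, (ζ ^ n) ^ k = if m ∣ n then (m : R) else 0 := by
  split_ifs with h
  · simp [(hζ.pow_eq_one_iff_dvd n).mpr h]
  · have hζn : ζ ^ n - 1 ≠ 0 := sub_ne_zero.mpr fun h' => h ((hζ.pow_eq_one_iff_dvd n).mp h')
    have hgeom : (∑ k ∈ range m, (ζ ^ n) ^ k) * (ζ ^ n - 1) = 0 := by
      rw [geom_sum_mul, ← pow_mul, mul_comm, pow_mul, hζ.pow_eq_one, one_pow, sub_self]
    exact (mul_eq_zero.mp hgeom).resolve_right hζn

theorem IsPrimitiveRoot.sum_pow_nthRoots {R : Type*} [CommRing R] [IsDomain R] {ζ : R} {m : ℕ}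
    (hζ : IsPrimitiveRoot ζ m) {α a : R} (hα : α ^ m = a) (n : ℕ) :
    ((nthRoots m a).map (· ^ n)).sum = if m ∣ n then m * α ^ n else 0 := by
  have hterm : ∀ k : ℕ, (ζ ^ k * α) ^ n = α ^ n * (ζ ^ n) ^ k := fun k => by
    rw [mul_pow, ← pow_mul, ← pow_mul, mul_comm k n, mul_comm]
  rw [hζ.nthRoots_eq hα, Multiset.map_map]
  simp only [Function.comp_def, hterm]
  change ∑ k ∈ range m, α ^ n * (ζ ^ n) ^ k = _
  rw [← mul_sum, hζ.sum_range_pow_pow, mul_ite, mul_zero, mul_comm]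

theorem Complex.sum_pow_nthRoots_two_pow {t : ℕ} (ht : t ≠ 0) (n : ℕ) :
    ((nthRoots (2 * t) ((2 : ℂ) ^ t)).map (· ^ n)).sum
      = if 2 * t ∣ n then (2 * t : ℕ) * (2 : ℂ) ^ (n / 2) else 0 := by
  have hsqrt : ((Real.sqrt 2 : ℝ) : ℂ) ^ 2 = 2 := by
    rw [← Complex.ofReal_pow, Real.sq_sqrt zero_le_two, Complex.ofReal_ofNat]
  rw [(Complex.isPrimitiveRoot_exp (2 * t) (by omega)).sum_pow_nthRoots
    (by rw [pow_mul, hsqrt]) n]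
  split_ifs with h
  · obtain ⟨k, rfl⟩ := dvd_trans (dvd_mul_right 2 t) h
    rw [pow_mul, hsqrt, Nat.mul_div_cancel_left k two_pos]
  · rfl

theorem Nat.mul_two_pow_div_two_le_two_pow_sub_one {t n : ℕ} (h : 2 * t ≤ n) :
    t * 2 ^ (n / 2) ≤ 2 ^ (n - 1) :=
  calc t * 2 ^ (n / 2) ≤ 2 ^ (t - 1) * 2 ^ (n / 2) := by
        gcongr
        have := Nat.lt_two_pow_self (n := t - 1)
        omega
    _ = 2 ^ (t - 1 + n / 2) := by rw [pow_add]
    _ ≤ 2 ^ (n - 1) := Nat.pow_le_pow_right (by norm_num) (by omega)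

open Polynomial in
theorem weight_value_from_roots (t : ℕ) (ht : 2 ≤ t) (n : ℕ) (hn : t ≤ n) :
    ((2 * t ∣ n →
      (2 : ℂ) ^ (n - 1) - (1 / 2) *
          ((((X : ℂ[X]) ^ (2 * t) - C (2 ^ t)).roots.map (fun a => a ^ n)).sum)
        = 2 ^ (n - 1) - (t : ℂ) * 2 ^ (n / 2)) ∧
    (¬ (2 * t ∣ n) →
      (2 : ℂ) ^ (n - 1) - (1 / 2) *
          ((((X : ℂ[X]) ^ (2 * t) - C (2 ^ t)).roots.map (fun a => a ^ n)).sum)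
        = 2 ^ (n - 1))) ∧
    ∃ k : ℕ, (2 : ℂ) ^ (n - 1) - (1 / 2) *
        ((((X : ℂ[X]) ^ (2 * t) - C (2 ^ t)).roots.map (fun a => a ^ n)).sum) = k := by
  have hsum := Complex.sum_pow_nthRoots_two_pow (t := t) (by omega) n
  rw [nthRoots] at hsum
  rw [hsum]
  by_cases h : 2 * t ∣ n
  · have hle := Nat.mul_two_pow_div_two_le_two_pow_sub_one (Nat.le_of_dvd (by omega) h)
    refine ⟨⟨fun _ => by simp only [h, if_true]; push_cast; ring, (absurd h ·)⟩,
      2 ^ (n - 1) - t * 2 ^ (n / 2), ?_⟩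
    simp only [h, if_true]
    push_cast [Nat.cast_sub hle]
    ring
  · refine ⟨⟨(absurd · h), fun _ => by simp [h]⟩, 2 ^ (n - 1), ?_⟩
    simp [h]
end

section
/- The quadratic Boolean function (1,2)_n(x) = x₁x₂ + x₂x₃ + … + x_{n−1}x_n + x_nx₁ over GF(2) is balanced (has weight 2^{n−1}) whenever n is odd, n ≥ 3. -/
/-!
Complementing every coordinate, `x ↦ x + 1`, is an involution of `(ZMod 2)^n`. It changes
`∑ xᵢ xᵢ₊₁` by `2 ∑ xᵢ + n = n`, so for odd `n` it swaps the zeros and the ones of `(1,2)_n`,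
which therefore have the same number `2^n / 2` of elements.
-/

open Finset

theorem two_mul_card_filter_eq_one_of_involutive {α : Type*} [Fintype α] (f : α → ZMod 2)
    {g : α → α} (hg : Function.Involutive g) (hflip : ∀ x, f (g x) = f x + 1) :
    2 * #{x | f x = 1} = Fintype.card α := by
  have hswap : #{x | f x = 1} = #{x | ¬f x = 1} := by
    refine card_nbij' g g ?_ ?_ (fun x _ => hg x) (fun x _ => hg x)
    · intro x hx
      simp only [coe_filter, mem_univ, true_and, Set.mem_ofPred_eq] at hx ⊢
      rw [hflip, hx]
      decide
    · intro x hx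
      simp only [coe_filter, mem_univ, true_and, Set.mem_ofPred_eq] at hx ⊢
      rw [hflip]
      revert hx
      generalize f x = a
      revert a
      decide
  rw [two_mul, ← card_univ]
  nth_rw 2 [hswap]
  exact card_filter_add_card_filter_not _

theorem sum_mul_shift_add_one {G R : Type*} [AddGroup G] [Fintype G] [CommRing R]
    (x : G → R) (a : G) :
    ∑ i, (x i + 1) * (x (i + a) + 1) =
      ∑ i, x i * x (i + a) + 2 * ∑ i, x i + Fintype.card G := by
  have hshift : ∑ i, x (i + a) = ∑ i, x i := Fintype.sum_equiv (Equiv.addRight a) _ _ fun _ => rfl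
  simp only [add_mul, mul_add, mul_one, one_mul, sum_add_distrib, hshift, sum_const, card_univ,
    nsmul_eq_mul, mul_one]
  ring

theorem one_two_balanced_odd_general (n : ℕ) [NeZero n] (hodd : Odd n) :
    (Finset.univ.filter
      (fun x : ZMod n → ZMod 2 => (∑ i : ZMod n, x i * x (i + 1)) = 1)).card = 2 ^ (n - 1) := by
  have hflip : ∀ x : ZMod n → ZMod 2,
      ∑ i, (x i + 1) * (x (i + 1) + 1) = ∑ i, x i * x (i + 1) + 1 := by
    intro x
    rw [sum_mul_shift_add_one, ZMod.card, hodd.natCast_zmod_two,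
      show (2 : ZMod 2) = 0 from rfl, zero_mul, add_zero]
  have hinv : Function.Involutive fun (x : ZMod n → ZMod 2) i => x i + 1 := fun x => by
    funext i
    show x i + 1 + 1 = x i
    rw [add_assoc, show (1 + 1 : ZMod 2) = 0 from rfl, add_zero]
  have hhalf := two_mul_card_filter_eq_one_of_involutive (fun x => ∑ i, x i * x (i + 1)) hinv hflip
  rw [Fintype.card_fun, ZMod.card, ZMod.card, ← mul_pow_sub_one (NeZero.ne n)] at hhalf
  exact Nat.eq_of_mul_eq_mul_left two_pos hhalf

theorem one_two_balanced_odd (n : ℕ) [NeZero n] (hn : 3 ≤ n) (hodd : Odd n) :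
    (Finset.univ.filter
      (fun x : ZMod n → ZMod 2 => (∑ i : ZMod n, x i * x (i + 1)) = 1)).card = 2 ^ (n - 1) :=
  one_two_balanced_odd_general n hodd
end
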